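/- With u the solution of the 2D wave equation with initial data (f,0) and v the solution with initial data (0,g), where f,g are smooth and compactly supported in a bounded domain Ω, the function t ↦ u(x,t)·v(x,t) is Lebesgue integrable on (0,∞) for each fixed x ∈ Ω. -/

import Mathlib

open MeasureTheory Real Set

noncomputable def circ (θ : ℝ) : EuclideanSpace ℝ (Fin 2) :=
  (EuclideanSpace.equiv (Fin 2) ℝ).symm ![Real.cos θ, Real.sin θ]

lemma continuous_circ : Continuous circ := by
  apply (EuclideanSpace.equiv (Fin 2) ℝ).symm.continuous.comp
  refine continuous_pi fun i => ?_
  fin_cases i <;> simp [continuous_cos, continuous_sin]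

lemma norm_circ (θ : ℝ) : ‖circ θ‖ = 1 := by
  rw [EuclideanSpace.norm_eq]
  simp [circ, Fin.sum_univ_two]

noncomputable def sphMean (f : EuclideanSpace ℝ (Fin 2) → ℝ)
    (x : EuclideanSpace ℝ (Fin 2)) (r : ℝ) : ℝ :=
  (1 / (2 * Real.pi)) * ∫ θ in (0:ℝ)..(2 * Real.pi), f (x + r • circ θ)

noncomputable def sphDeriv (f : EuclideanSpace ℝ (Fin 2) → ℝ)
    (x : EuclideanSpace ℝ (Fin 2)) (r : ℝ) : ℝ :=
  (1 / (2 * Real.pi)) * ∫ θ in Ioc (0:ℝ) (2 * Real.pi), fderiv ℝ f (x + r • circ θ) (circ θ)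

variable {f : EuclideanSpace ℝ (Fin 2) → ℝ} {x : EuclideanSpace ℝ (Fin 2)}

lemma sphMean_eq (f : EuclideanSpace ℝ (Fin 2) → ℝ) (x : EuclideanSpace ℝ (Fin 2)) :
    sphMean f x = fun r => (1 / (2 * Real.pi)) * ∫ θ in Ioc (0:ℝ) (2 * Real.pi), f (x + r • circ θ) := by
  funext r
  rw [sphMean, intervalIntegral.integral_of_le (by positivity : (0:ℝ) ≤ 2 * π)]

lemma abs_sphMean_le (hcont : Continuous f) {C : ℝ} (hC : ∀ y, |f y| ≤ C) (r : ℝ) : |sphMean f x r| ≤ C := by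
  have hC0 : 0 ≤ C := le_trans (abs_nonneg _) (hC 0)
  have h : |∫ θ in Ioc (0:ℝ) (2 * π), f (x + r • circ θ)| ≤ C * (volume (Ioc (0:ℝ) (2*π))).toReal := by
    exact norm_setIntegral_le_of_norm_le_const (measure_Ioc_lt_top : volume (Ioc (0:ℝ) (2*π)) < ⊤) (fun θ _ => (Real.norm_eq_abs _) ▸ hC _)
  rw [sphMean_eq]
  simp only [Real.volume_Ioc] at h
  have hpos : (0:ℝ) ≤ 1/(2*π) := by positivity
  rw [abs_mul, abs_of_nonneg hpos]
  have h2 : (ENNReal.ofReal (2 * π - 0)).toReal = 2 * π := by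
    rw [sub_zero, ENNReal.toReal_ofReal]; positivity
  rw [h2] at h
  calc 1 / (2*π) * |∫ θ in Ioc (0:ℝ) (2 * π), f (x + r • circ θ)|
      ≤ 1 / (2*π) * (C * (2*π)) := by
        apply mul_le_mul_of_nonneg_left h (by positivity)
    _ = C := by field_simp

lemma abs_sphDeriv_le (hf : ContDiff ℝ (⊤ : ℕ∞) f) {L : ℝ} (hL : ∀ y, ‖fderiv ℝ f y‖ ≤ L) (r : ℝ) :
    |sphDeriv f x r| ≤ L := by
  have hL0 : 0 ≤ L := le_trans (norm_nonneg _) (hL 0)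
  have key : ∀ θ : ℝ, ‖fderiv ℝ f (x + r • circ θ) (circ θ)‖ ≤ L := by
    intro θ
    calc ‖fderiv ℝ f (x + r • circ θ) (circ θ)‖
        ≤ ‖fderiv ℝ f (x + r • circ θ)‖ * ‖circ θ‖ := ContinuousLinearMap.le_opNorm _ _
      _ ≤ L := by rw [norm_circ]; simpa using hL _
  have hmeas : AEStronglyMeasurable (fun θ => fderiv ℝ f (x + r • circ θ) (circ θ))
      (volume.restrict (Ioc (0:ℝ) (2*π))) := by
    apply Continuous.aestronglyMeasurable
    exact (((hf.continuous_fderiv (by simp)).comp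
      (continuous_const.add (continuous_circ.const_smul r))).clm_apply continuous_circ)
  have h : ‖∫ θ in Ioc (0:ℝ) (2 * π), fderiv ℝ f (x + r • circ θ) (circ θ)‖
      ≤ L * (volume (Ioc (0:ℝ) (2*π))).toReal :=
    norm_setIntegral_le_of_norm_le_const (measure_Ioc_lt_top : volume (Ioc (0:ℝ) (2*π)) < ⊤)
      (fun θ _ => key θ)
  rw [sphDeriv]
  have hpos : (0:ℝ) ≤ 1/(2*π) := by positivity
  rw [abs_mul, abs_of_nonneg hpos]
  simp only [Real.volume_Ioc] at h
  have h2 : (ENNReal.ofReal (2 * π - 0)).toReal = 2 * π := by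
    rw [sub_zero, ENNReal.toReal_ofReal]; positivity
  rw [h2] at h
  rw [Real.norm_eq_abs] at h
  calc 1 / (2*π) * |∫ θ in Ioc (0:ℝ) (2 * π), fderiv ℝ f (x + r • circ θ) (circ θ)|
      ≤ 1 / (2*π) * (L * (2*π)) := by
        apply mul_le_mul_of_nonneg_left h hpos
    _ = L := by field_simp

lemma sphMean_eq_zero {ρ : ℝ} (hρ : tsupport f ⊆ Metric.closedBall 0 ρ) {r : ℝ}
    (hr : ρ + ‖x‖ + 1 ≤ r) : sphMean f x r = 0 := by
  have : ∀ θ : ℝ, f (x + r • circ θ) = 0 := by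
    intro θ
    apply image_eq_zero_of_notMem_tsupport
    intro hmem
    have h1 : ‖x + r • circ θ‖ ≤ ρ := by simpa using hρ hmem
    have h2 : ‖r • circ θ‖ ≤ ‖x + r • circ θ‖ + ‖x‖ := by
      calc ‖r • circ θ‖ = ‖(x + r • circ θ) - x‖ := by congr 1; abel
        _ ≤ ‖x + r • circ θ‖ + ‖x‖ := norm_sub_le _ _
    rw [norm_smul, norm_circ, mul_one, Real.norm_eq_abs] at h2
    have : |r| ≥ r := le_abs_self r
    nlinarith [norm_nonneg x]
  simp [sphMean, this]

lemma sphDeriv_eq_zero {ρ : ℝ} (hρ : tsupport f ⊆ Metric.closedBall 0 ρ) {r : ℝ}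
    (hr : ρ + ‖x‖ + 1 ≤ r) : sphDeriv f x r = 0 := by
  have : ∀ θ : ℝ, fderiv ℝ f (x + r • circ θ) = 0 := by
    intro θ
    by_contra hne
    have hmem : (x + r • circ θ) ∈ tsupport f :=
      support_fderiv_subset (𝕜 := ℝ) (Function.mem_support.2 hne)
    have h1 : ‖x + r • circ θ‖ ≤ ρ := by simpa using hρ hmem
    have h2 : ‖r • circ θ‖ ≤ ‖x + r • circ θ‖ + ‖x‖ := by
      calc ‖r • circ θ‖ = ‖(x + r • circ θ) - x‖ := by congr 1; abel
        _ ≤ ‖x + r • circ θ‖ + ‖x‖ := norm_sub_le _ _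
    rw [norm_smul, norm_circ, mul_one, Real.norm_eq_abs] at h2
    have : |r| ≥ r := le_abs_self r
    nlinarith [norm_nonneg x]
  simp [sphDeriv, this]

lemma sphMean_hasDerivAt (hf : ContDiff ℝ (⊤ : ℕ∞) f) (hfc : HasCompactSupport f) (r₀ : ℝ) :
    HasDerivAt (sphMean f x) (sphDeriv f x r₀) r₀ := by
  obtain ⟨L, hL⟩ := (hfc.fderiv ℝ).exists_bound_of_continuous (hf.continuous_fderiv (by simp))
  rw [sphMean_eq, sphDeriv]
  apply HasDerivAt.const_mul
  have key := hasDerivAt_integral_of_dominated_loc_of_deriv_le (μ := volume.restrict (Ioc (0:ℝ) (2*π)))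
    (F := fun r θ => f (x + r • circ θ))
    (F' := fun r θ => fderiv ℝ f (x + r • circ θ) (circ θ))
    (x₀ := r₀) (bound := fun _ => L) (Metric.ball_mem_nhds _ one_pos)
    (Filter.Eventually.of_forall (fun r => (((hf.continuous.comp
      (continuous_const.add (continuous_circ.const_smul r))) : Continuous fun θ => f (x + r • circ θ)).aestronglyMeasurable)))
    (((hf.continuous.comp (continuous_const.add
      (continuous_circ.const_smul r₀))).integrableOn_Ioc))
    ((((hf.continuous_fderiv (by simp)).comp (continuous_const.add
      (continuous_circ.const_smul r₀))).clm_apply continuous_circ).aestronglyMeasurable)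
    (Filter.Eventually.of_forall (fun θ => fun r _ => by
      calc ‖fderiv ℝ f (x + r • circ θ) (circ θ)‖
          ≤ ‖fderiv ℝ f (x + r • circ θ)‖ * ‖circ θ‖ := ContinuousLinearMap.le_opNorm _ _
        _ ≤ L := by rw [norm_circ, mul_one]; exact hL _))
    (integrable_const L)
    (Filter.Eventually.of_forall (fun θ => fun r _ => by
      have h1 : HasDerivAt (fun s : ℝ => x + s • circ θ) (circ θ) r := by
        simpa using ((hasDerivAt_id r).smul_const (circ θ)).const_add x
      exact ((hf.differentiable (by simp)).differentiableAt.hasFDerivAt.comp_hasDerivAt r h1)))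
  exact key.2

noncomputable def Gfun (M : ℝ → ℝ) (s : ℝ) : ℝ :=
  ∫ θ in Ioo (0:ℝ) (π/2), Real.sin θ * M (s * Real.sin θ)

lemma image_mul_sin {t : ℝ} (ht : 0 < t) :
    (fun θ : ℝ => t * Real.sin θ) '' Ioo 0 (π/2) = Ioo 0 t := by
  ext y
  constructor
  · rintro ⟨θ, hθ, rfl⟩
    have hsinpos : 0 < Real.sin θ :=
      Real.sin_pos_of_pos_of_lt_pi hθ.1 (lt_trans hθ.2 (by linarith [Real.pi_pos]))
    have hsinlt : Real.sin θ < 1 := by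
      have h := Real.strictMonoOn_sin (a := θ) (b := π/2)
        ⟨by linarith [hθ.1, Real.pi_pos], hθ.2.le⟩
        ⟨by linarith [Real.pi_pos], le_refl _⟩ hθ.2
      rwa [Real.sin_pi_div_two] at h
    exact ⟨mul_pos ht hsinpos, by show t * Real.sin θ < t; nlinarith⟩
  · intro hy
    refine ⟨Real.arcsin (y / t), ⟨?_, ?_⟩, ?_⟩
    · exact Real.arcsin_pos.2 (div_pos hy.1 ht)
    · exact Real.arcsin_lt_pi_div_two.2 (by rw [div_lt_one ht]; exact hy.2)
    · show t * Real.sin (Real.arcsin (y/t)) = y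
      rw [Real.sin_arcsin (le_trans (by norm_num) (div_pos hy.1 ht).le) ((div_le_one ht).2 hy.2.le)]
      field_simp

lemma cov (M : ℝ → ℝ) {t : ℝ} (ht : 0 < t) :
    (∫ r in (0:ℝ)..t, r * M r / Real.sqrt (t ^ 2 - r ^ 2)) = t * Gfun M t := by
  rw [intervalIntegral.integral_of_le ht.le, MeasureTheory.integral_Ioc_eq_integral_Ioo,
    ← image_mul_sin ht]
  have hderiv : ∀ θ ∈ Ioo (0:ℝ) (π/2),
      HasDerivWithinAt (fun θ : ℝ => t * Real.sin θ) (t * Real.cos θ) (Ioo (0:ℝ) (π/2)) θ :=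
    fun θ _ => ((Real.hasDerivAt_sin θ).const_mul t).hasDerivWithinAt
  have hinj : InjOn (fun θ : ℝ => t * Real.sin θ) (Ioo (0:ℝ) (π/2)) := by
    intro a ha b hb hab
    have : Real.sin a = Real.sin b := mul_left_cancel₀ (ne_of_gt ht) hab
    exact Real.injOn_sin ⟨by linarith [ha.1, Real.pi_pos], by linarith [ha.2]⟩
      ⟨by linarith [hb.1, Real.pi_pos], by linarith [hb.2]⟩ this
  rw [integral_image_eq_integral_abs_deriv_smul measurableSet_Ioo hderiv hinj]
  rw [show (∫ θ in Ioo (0:ℝ) (π/2), |t * Real.cos θ| •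
      ((t * Real.sin θ) * M (t * Real.sin θ) / Real.sqrt (t ^ 2 - (t * Real.sin θ) ^ 2)))
      = ∫ θ in Ioo (0:ℝ) (π/2), t * (Real.sin θ * M (t * Real.sin θ)) from ?_]
  · exact integral_const_mul t _
  apply MeasureTheory.setIntegral_congr_fun measurableSet_Ioo
  intro θ hθ
  have hcos : 0 < Real.cos θ := Real.cos_pos_of_mem_Ioo ⟨by linarith [hθ.1, Real.pi_pos], hθ.2⟩
  have hsq : t ^ 2 - (t * Real.sin θ) ^ 2 = (t * Real.cos θ) ^ 2 := by
    have := Real.sin_sq_add_cos_sq θ; nlinarith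
  have hsqrt : Real.sqrt (t ^ 2 - (t * Real.sin θ) ^ 2) = t * Real.cos θ := by
    rw [hsq, Real.sqrt_sq (by positivity)]
  show |t * Real.cos θ| • ((t * Real.sin θ) * M (t * Real.sin θ) / Real.sqrt (t ^ 2 - (t * Real.sin θ) ^ 2))
      = t * (Real.sin θ * M (t * Real.sin θ))
  rw [hsqrt, abs_of_pos (by positivity), smul_eq_mul]
  field_simp

lemma bound_global {q : ℝ → ℝ} {C : ℝ} (hq : ∀ θ ∈ Ioo (0:ℝ) (π/2), |Real.sin θ * q θ| ≤ C) :
    |∫ θ in Ioo (0:ℝ) (π/2), Real.sin θ * q θ| ≤ C * (π/2) := by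
  have hae : ∀ᵐ θ ∂(volume.restrict (Ioo (0:ℝ) (π/2))),
      ‖Real.sin θ * q θ‖ ≤ (fun _ => C) θ :=
    (ae_restrict_iff' measurableSet_Ioo).2 (Filter.Eventually.of_forall
      (fun θ hθ => by rw [Real.norm_eq_abs]; exact hq θ hθ))
  have h := norm_integral_le_of_norm_le (integrable_const C) hae
  rw [Real.norm_eq_abs] at h
  rwa [integral_const, measureReal_restrict_apply_univ, Real.volume_real_Ioo_of_le (by positivity), sub_zero, smul_eq_mul,
    mul_comm] at h

lemma bound_decay {q : ℝ → ℝ} {C R s : ℝ} (hC : 0 ≤ C) (hR : 1 ≤ R) (hs : R ≤ s)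
    (hq : ∀ θ ∈ Ioo (0:ℝ) (π/2), |q θ| ≤ C)
    (hq0 : ∀ θ ∈ Ioo (0:ℝ) (π/2), R ≤ s * Real.sin θ → q θ = 0) :
    |∫ θ in Ioo (0:ℝ) (π/2), Real.sin θ * q θ| ≤ C * (R / s) * (π * R / (2 * s)) := by
  have hspos : 0 < s := lt_of_lt_of_le (by linarith) hs
  set δ := π * R / (2 * s) with hδ
  have hδpos : 0 < δ := by rw [hδ]; positivity
  have hδle : δ ≤ π / 2 := by
    rw [hδ, div_le_div_iff₀ (by positivity) (by norm_num)]
    nlinarith [Real.pi_pos]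
  have hmaj : ∀ᵐ θ ∂(volume.restrict (Ioo (0:ℝ) (π/2))),
      ‖Real.sin θ * q θ‖ ≤ (Ioo (0:ℝ) δ).indicator (fun _ => C * (R / s)) θ := by
    refine (ae_restrict_iff' measurableSet_Ioo).2 (Filter.Eventually.of_forall (fun θ hθ => ?_))
    have hsin0 : 0 ≤ Real.sin θ := Real.sin_nonneg_of_nonneg_of_le_pi hθ.1.le
      (by linarith [hθ.2, Real.pi_pos])
    by_cases hcase : R ≤ s * Real.sin θ
    · rw [hq0 θ hθ hcase, mul_zero, norm_zero]
      exact Set.indicator_nonneg (fun _ _ => by positivity) θ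
    · push_neg at hcase
      have hsinlt : Real.sin θ < R / s := (lt_div_iff₀ hspos).2 (by linarith)
      have hθlt : θ < δ := by
        have hj := Real.mul_le_sin hθ.1.le hθ.2.le
        rw [hδ]
        rw [lt_div_iff₀ (by positivity)]
        have h2 : 2 / π * θ < R / s := lt_of_le_of_lt hj hsinlt
        have hπ := Real.pi_pos
        rw [div_mul_eq_mul_div, div_lt_div_iff₀ hπ hspos] at h2
        nlinarith
      have : θ ∈ Ioo (0:ℝ) δ := ⟨hθ.1, hθlt⟩
      rw [Set.indicator_of_mem this, Real.norm_eq_abs, abs_mul,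
        abs_of_nonneg hsin0]
      have := hq θ hθ
      have hRs : 0 < R / s := by positivity
      nlinarith [abs_nonneg (q θ)]
  have hint : Integrable ((Ioo (0:ℝ) δ).indicator (fun _ => C * (R / s)))
      (volume.restrict (Ioo (0:ℝ) (π/2))) :=
    (integrable_const _).indicator measurableSet_Ioo
  have h := norm_integral_le_of_norm_le hint hmaj
  rw [Real.norm_eq_abs] at h
  rwa [integral_indicator measurableSet_Ioo, Measure.restrict_restrict measurableSet_Ioo,
    Set.inter_eq_left.2 (Ioo_subset_Ioo le_rfl hδle), setIntegral_const, Real.volume_real_Ioo_of_le hδpos.le,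
    sub_zero, smul_eq_mul, mul_comm δ] at h

lemma Gfun_hasDerivAt {M M' : ℝ → ℝ} (hM : ∀ r, HasDerivAt M (M' r) r)
    {L : ℝ} (hL : ∀ r, |M' r| ≤ L) (s₀ : ℝ) :
    HasDerivAt (Gfun M)
      (∫ θ in Ioo (0:ℝ) (π/2), Real.sin θ * (Real.sin θ * M' (s₀ * Real.sin θ))) s₀ := by
  have hL0 : 0 ≤ L := le_trans (abs_nonneg _) (hL 0)
  have hMc : Continuous M := Differentiable.continuous (fun r => (hM r).differentiableAt)
  have hM'meas : Measurable M' := by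
    have : M' = deriv M := funext fun r => ((hM r).deriv).symm
    rw [this]; exact measurable_deriv M
  have key := hasDerivAt_integral_of_dominated_loc_of_deriv_le
    (μ := volume.restrict (Ioo (0:ℝ) (π/2)))
    (F := fun s θ => Real.sin θ * M (s * Real.sin θ))
    (F' := fun s θ => Real.sin θ * (Real.sin θ * M' (s * Real.sin θ)))
    (x₀ := s₀) (bound := fun _ => L) (Metric.ball_mem_nhds _ one_pos)
    (Filter.Eventually.of_forall (fun s =>
      (continuous_sin.mul (hMc.comp (continuous_const.mul continuous_sin))).aestronglyMeasurable))
    (((continuous_sin.mul (hMc.comp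
      (continuous_const.mul continuous_sin))).integrableOn_Ioc).mono_set Ioo_subset_Ioc_self)
    ((measurable_sin.mul (measurable_sin.mul
      (hM'meas.comp (measurable_const.mul measurable_sin)))).aestronglyMeasurable)
    (Filter.Eventually.of_forall (fun θ s _ => by
      rw [Real.norm_eq_abs, abs_mul, abs_mul]
      have h1 : |Real.sin θ| ≤ 1 := abs_le.2 ⟨Real.neg_one_le_sin θ, Real.sin_le_one θ⟩
      have h2 := hL (s * Real.sin θ)
      have hm := abs_nonneg (M' (s * Real.sin θ))
      calc |Real.sin θ| * (|Real.sin θ| * |M' (s * Real.sin θ)|)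
          ≤ 1 * (1 * |M' (s * Real.sin θ)|) := by
            apply mul_le_mul h1 (mul_le_mul h1 le_rfl hm (by norm_num)) (by positivity) (by norm_num)
        _ = |M' (s * Real.sin θ)| := by ring
        _ ≤ L := h2))
    (integrable_const L)
    (Filter.Eventually.of_forall (fun θ s _ => by
      have h1 : HasDerivAt (fun s : ℝ => s * Real.sin θ) (Real.sin θ) s :=
        hasDerivAt_mul_const _
      have h2 := ((hM (s * Real.sin θ)).comp s h1).const_mul (Real.sin θ)
      simpa [mul_comm, mul_left_comm] using h2))
  exact key.2

lemma abs_mul_le_of_le_one {a b C : ℝ} (ha : |a| ≤ 1) (hb : |b| ≤ C) : |a * b| ≤ C := by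
  rw [abs_mul]
  nlinarith [abs_nonneg a, abs_nonneg b]

lemma abs_sin_le_one' (θ : ℝ) : |Real.sin θ| ≤ 1 :=
  abs_le.2 ⟨Real.neg_one_le_sin θ, Real.sin_le_one θ⟩

/-- With `u(x,t) = ∂_t ∫_0^t r·Mf(x,r)/√(t²−r²) dr` and
`v(x,t) = ∫_0^t r·Mg(x,r)/√(t²−r²) dr` the solutions of the 2D wave equation with initial
data `(f,0)` and `(0,g)`, where `f, g` are smooth and compactly supported in a bounded
domain `Ω`, the function `t ↦ u(x,t)·v(x,t)` is integrable on `(0,∞)` for each `x ∈ Ω`. -/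
theorem stmt13 (Ω : Set (EuclideanSpace ℝ (Fin 2))) (hΩo : IsOpen Ω)
    (hΩb : Bornology.IsBounded Ω)
    (f g : EuclideanSpace ℝ (Fin 2) → ℝ) (hf : ContDiff ℝ (⊤ : ℕ∞) f) (hg : ContDiff ℝ (⊤ : ℕ∞) g)
    (hfc : HasCompactSupport f) (hgc : HasCompactSupport g)
    (hfΩ : tsupport f ⊆ Ω) (hgΩ : tsupport g ⊆ Ω)
    (x : EuclideanSpace ℝ (Fin 2)) (hx : x ∈ Ω) :
    IntegrableOn (fun t =>
      (deriv (fun s => ∫ r in (0:ℝ)..s, r * sphMean f x r / Real.sqrt (s ^ 2 - r ^ 2)) t) *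
        (∫ r in (0:ℝ)..t, r * sphMean g x r / Real.sqrt (t ^ 2 - r ^ 2)))
      (Set.Ioi (0:ℝ)) := by
  -- bounds on f, g and their derivatives
  obtain ⟨Cf₀, hCf₀⟩ := hfc.exists_bound_of_continuous hf.continuous
  obtain ⟨Cg₀, hCg₀⟩ := hgc.exists_bound_of_continuous hg.continuous
  obtain ⟨Lf₀, hLf₀⟩ := (hfc.fderiv ℝ).exists_bound_of_continuous (hf.continuous_fderiv (by simp))
  obtain ⟨Lg₀, hLg₀⟩ := (hgc.fderiv ℝ).exists_bound_of_continuous (hg.continuous_fderiv (by simp))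
  set Cf := max Cf₀ 0 with hCfdef
  set Cg := max Cg₀ 0 with hCgdef
  set Lf := max Lf₀ 0 with hLfdef
  set Lg := max Lg₀ 0 with hLgdef
  have hCf : ∀ y, |f y| ≤ Cf := fun y => le_trans ((Real.norm_eq_abs _) ▸ hCf₀ y) (le_max_left _ _)
  have hCg : ∀ y, |g y| ≤ Cg := fun y => le_trans ((Real.norm_eq_abs _) ▸ hCg₀ y) (le_max_left _ _)
  have hLf : ∀ y, ‖fderiv ℝ f y‖ ≤ Lf := fun y => le_trans (hLf₀ y) (le_max_left _ _)
  have hLg : ∀ y, ‖fderiv ℝ g y‖ ≤ Lg := fun y => le_trans (hLg₀ y) (le_max_left _ _)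
  have hCf0 : 0 ≤ Cf := le_max_right _ _
  have hCg0 : 0 ≤ Cg := le_max_right _ _
  have hLf0 : 0 ≤ Lf := le_max_right _ _
  -- radius
  obtain ⟨ρf, hρf⟩ := hfc.isBounded.subset_closedBall 0
  obtain ⟨ρg, hρg⟩ := hgc.isBounded.subset_closedBall 0
  set ρ := max ρf ρg with hρdef
  have hρf' : tsupport f ⊆ Metric.closedBall 0 ρ :=
    hρf.trans (Metric.closedBall_subset_closedBall (le_max_left _ _))
  have hρg' : tsupport g ⊆ Metric.closedBall 0 ρ :=
    hρg.trans (Metric.closedBall_subset_closedBall (le_max_right _ _))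
  set R := max (ρ + ‖x‖ + 1) 1 with hRdef
  have hR1 : (1:ℝ) ≤ R := le_max_right _ _
  have hR0 : (0:ℝ) < R := lt_of_lt_of_le one_pos hR1
  have hMfz : ∀ r, R ≤ r → sphMean f x r = 0 := fun r hr =>
    sphMean_eq_zero hρf' (le_trans (le_max_left _ _) hr)
  have hMf'z : ∀ r, R ≤ r → sphDeriv f x r = 0 := fun r hr =>
    sphDeriv_eq_zero hρf' (le_trans (le_max_left _ _) hr)
  have hMgz : ∀ r, R ≤ r → sphMean g x r = 0 := fun r hr =>
    sphMean_eq_zero hρg' (le_trans (le_max_left _ _) hr)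
  -- derivative structure
  have hMf' : ∀ r, HasDerivAt (sphMean f x) (sphDeriv f x r) r := sphMean_hasDerivAt hf hfc
  have hMg' : ∀ r, HasDerivAt (sphMean g x) (sphDeriv g x r) r := sphMean_hasDerivAt hg hgc
  have hbMf : ∀ r, |sphMean f x r| ≤ Cf := abs_sphMean_le hf.continuous hCf
  have hbMg : ∀ r, |sphMean g x r| ≤ Cg := abs_sphMean_le hg.continuous hCg
  have hbMf' : ∀ r, |sphDeriv f x r| ≤ Lf := abs_sphDeriv_le hf hLf
  set G' : ℝ → ℝ := fun s =>
    ∫ θ in Ioo (0:ℝ) (π/2), Real.sin θ * (Real.sin θ * sphDeriv f x (s * Real.sin θ)) with hG'def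
  have hG : ∀ s, HasDerivAt (Gfun (sphMean f x)) (G' s) s := Gfun_hasDerivAt hMf' hbMf'
  have hGg : ∀ s, HasDerivAt (Gfun (sphMean g x))
      (∫ θ in Ioo (0:ℝ) (π/2), Real.sin θ * (Real.sin θ * sphDeriv g x (s * Real.sin θ))) s :=
    Gfun_hasDerivAt hMg' (abs_sphDeriv_le hg hLg)
  set Mf := sphMean f x with hMfdef
  set Mg := sphMean g x with hMgdef
  set φ : ℝ → ℝ := fun t => (Gfun Mf t + t * G' t) * (t * Gfun Mg t) with hφdef
  have hπ2 : (0:ℝ) ≤ π/2 := by positivity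
  -- measurability
  have hGfc : Continuous (Gfun Mf) := Differentiable.continuous (fun s => (hG s).differentiableAt)
  have hGgc : Continuous (Gfun Mg) := Differentiable.continuous (fun s => (hGg s).differentiableAt)
  have hG'meas : Measurable G' := by
    have h : G' = deriv (Gfun Mf) := funext fun s => ((hG s).deriv).symm
    rw [h]; exact measurable_deriv _
  have hφm : Measurable φ :=
    ((hGfc.measurable.add (measurable_id.mul hG'meas)).mul
      (measurable_id.mul hGgc.measurable))
  -- global bounds
  have hbGf : ∀ t, |Gfun Mf t| ≤ Cf * (π/2) := fun t =>
    bound_global (fun θ _ => abs_mul_le_of_le_one (abs_sin_le_one' θ) (hbMf _))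
  have hbGg : ∀ t, |Gfun Mg t| ≤ Cg * (π/2) := fun t =>
    bound_global (fun θ _ => abs_mul_le_of_le_one (abs_sin_le_one' θ) (hbMg _))
  have hbG' : ∀ t, |G' t| ≤ Lf * (π/2) := fun t =>
    bound_global (fun θ _ => abs_mul_le_of_le_one (abs_sin_le_one' θ)
      (abs_mul_le_of_le_one (abs_sin_le_one' θ) (hbMf' _)))
  -- decay bounds
  have hdGf : ∀ t, R ≤ t → |Gfun Mf t| ≤ Cf * (R/t) * (π*R/(2*t)) := fun t ht =>
    bound_decay hCf0 hR1 ht (fun θ _ => hbMf _) (fun θ _ h => hMfz _ h)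
  have hdGg : ∀ t, R ≤ t → |Gfun Mg t| ≤ Cg * (R/t) * (π*R/(2*t)) := fun t ht =>
    bound_decay hCg0 hR1 ht (fun θ _ => hbMg _) (fun θ _ h => hMgz _ h)
  have hdG' : ∀ t, R ≤ t → |G' t| ≤ Lf * (R/t) * (π*R/(2*t)) := fun t ht =>
    bound_decay hLf0 hR1 ht
      (fun θ _ => abs_mul_le_of_le_one (abs_sin_le_one' θ) (hbMf' _))
      (fun θ _ h => by rw [hMf'z _ h, mul_zero])
  -- the pointwise identification on Ioi 0
  have hEq : Set.EqOn φ (fun t =>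
      (deriv (fun s => ∫ r in (0:ℝ)..s, r * sphMean f x r / Real.sqrt (s ^ 2 - r ^ 2)) t) *
        (∫ r in (0:ℝ)..t, r * sphMean g x r / Real.sqrt (t ^ 2 - r ^ 2))) (Set.Ioi 0) := by
    intro t ht
    have ht' : (0:ℝ) < t := ht
    have h2 : (∫ r in (0:ℝ)..t, r * sphMean g x r / Real.sqrt (t ^ 2 - r ^ 2))
        = t * Gfun Mg t := cov _ ht'
    have hev : (fun s => ∫ r in (0:ℝ)..s, r * sphMean f x r / Real.sqrt (s ^ 2 - r ^ 2))
        =ᶠ[nhds t] (fun s => s * Gfun Mf s) :=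
      Filter.eventuallyEq_of_mem (Ioi_mem_nhds ht') (fun s hs => cov _ hs)
    have hd : deriv (fun s => ∫ r in (0:ℝ)..s, r * sphMean f x r / Real.sqrt (s ^ 2 - r ^ 2)) t
        = Gfun Mf t + t * G' t := by
      rw [hev.deriv_eq]
      have hder := ((hasDerivAt_id' (x := t)).mul (hG t)).deriv
      simpa [Pi.mul_def] using hder
    show (Gfun Mf t + t * G' t) * (t * Gfun Mg t) =
      (deriv (fun s => ∫ r in (0:ℝ)..s, r * sphMean f x r / Real.sqrt (s ^ 2 - r ^ 2)) t) *
        (∫ r in (0:ℝ)..t, r * sphMean g x r / Real.sqrt (t ^ 2 - r ^ 2))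
    rw [hd, h2]
  -- integrability of φ on (0, R]
  have hint1 : IntegrableOn φ (Ioc (0:ℝ) R) := by
    refine Integrable.mono' (g := fun _ => (Cf * (π/2) + R * (Lf * (π/2))) * (R * (Cg * (π/2))))
      (integrableOn_const measure_Ioc_lt_top.ne) hφm.aestronglyMeasurable ?_
    refine (ae_restrict_iff' measurableSet_Ioc).2 (Filter.Eventually.of_forall (fun t ht => ?_))
    have hA : |Gfun Mf t + t * G' t| ≤ Cf * (π/2) + R * (Lf * (π/2)) := by
      refine (abs_add_le _ _).trans (add_le_add (hbGf t) ?_)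
      rw [abs_mul, abs_of_pos ht.1]
      exact mul_le_mul ht.2 (hbG' t) (abs_nonneg _) hR0.le
    have hB : |t * Gfun Mg t| ≤ R * (Cg * (π/2)) := by
      rw [abs_mul, abs_of_pos ht.1]
      exact mul_le_mul ht.2 (hbGg t) (abs_nonneg _) hR0.le
    rw [Real.norm_eq_abs]
    calc |φ t| = |Gfun Mf t + t * G' t| * |t * Gfun Mg t| := abs_mul _ _
      _ ≤ (Cf * (π/2) + R * (Lf * (π/2))) * (R * (Cg * (π/2))) :=
          mul_le_mul hA hB (abs_nonneg _)
            (add_nonneg (mul_nonneg hCf0 hπ2) (mul_nonneg hR0.le (mul_nonneg hLf0 hπ2)))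
  -- integrability of φ on (R, ∞)
  set KA := (Cf + Lf) * π * R^2 / 2 with hKA
  set KB := Cg * π * R^2 / 2 with hKB
  have hKAnn : 0 ≤ KA := by
    rw [hKA]
    have h : 0 ≤ (Cf + Lf) * π * R^2 :=
      mul_nonneg (mul_nonneg (add_nonneg hCf0 hLf0) Real.pi_pos.le) (sq_nonneg R)
    linarith
  have hKBnn : 0 ≤ KB := by
    rw [hKB]
    have h : 0 ≤ Cg * π * R^2 := mul_nonneg (mul_nonneg hCg0 Real.pi_pos.le) (sq_nonneg R)
    linarith
  have hint2 : IntegrableOn φ (Ioi R) := by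
    have hmaj : IntegrableOn (fun t => (KA*KB) * t ^ (-2:ℝ)) (Ioi R) :=
      (integrableOn_Ioi_rpow_of_lt (by norm_num) hR0).const_mul _
    refine Integrable.mono' hmaj hφm.aestronglyMeasurable ?_
    refine (ae_restrict_iff' measurableSet_Ioi).2 (Filter.Eventually.of_forall (fun t ht => ?_))
    have htR : R ≤ t := le_of_lt ht
    have ht0 : 0 < t := lt_of_lt_of_le hR0 htR
    have ht1 : (1:ℝ) ≤ t := le_trans hR1 htR
    have hrp : t ^ (-2:ℝ) = 1/t^2 := by
      rw [show (-2:ℝ) = -((2:ℕ):ℝ) by norm_num, Real.rpow_neg ht0.le, Real.rpow_natCast, one_div]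
    have hvu : 1/t^2 ≤ 1/t := by
      apply one_div_le_one_div_of_le ht0
      nlinarith
    have e1 : Cf * (R/t) * (π*R/(2*t)) = (Cf*π*R^2/2) * (1/t^2) := by field_simp
    have e2 : t * (Lf * (R/t) * (π*R/(2*t))) = (Lf*π*R^2/2) * (1/t) := by field_simp
    have e3 : t * (Cg * (R/t) * (π*R/(2*t))) = KB * (1/t) := by rw [hKB]; field_simp
    have hcfn : 0 ≤ Cf*π*R^2/2 := by
      have h : 0 ≤ Cf * π * R^2 := mul_nonneg (mul_nonneg hCf0 Real.pi_pos.le) (sq_nonneg R)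
      linarith
    have hA : |Gfun Mf t + t * G' t| ≤ KA * (1/t) := by
      have h1 := hdGf t htR
      rw [e1] at h1
      have h2 : |t * G' t| ≤ t * (Lf * (R/t) * (π*R/(2*t))) := by
        rw [abs_mul, abs_of_pos ht0]
        exact mul_le_mul_of_nonneg_left (hdG' t htR) ht0.le
      rw [e2] at h2
      have h3 : Cf*π*R^2/2 * (1/t^2) ≤ Cf*π*R^2/2 * (1/t) :=
        mul_le_mul_of_nonneg_left hvu hcfn
      have h4 : KA * (1/t) = Cf*π*R^2/2 * (1/t) + Lf*π*R^2/2 * (1/t) := by rw [hKA]; ring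
      calc |Gfun Mf t + t * G' t| ≤ |Gfun Mf t| + |t * G' t| := abs_add_le _ _
        _ ≤ Cf*π*R^2/2 * (1/t) + Lf*π*R^2/2 * (1/t) := by linarith
        _ = KA * (1/t) := h4.symm
    have hB : |t * Gfun Mg t| ≤ KB * (1/t) := by
      rw [abs_mul, abs_of_pos ht0, ← e3]
      exact mul_le_mul_of_nonneg_left (hdGg t htR) ht0.le
    rw [Real.norm_eq_abs]
    calc |φ t| = |Gfun Mf t + t * G' t| * |t * Gfun Mg t| := abs_mul _ _
      _ ≤ (KA * (1/t)) * (KB * (1/t)) := by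
          apply mul_le_mul hA hB (abs_nonneg _)
          exact mul_nonneg hKAnn (by positivity)
      _ = KA*KB * (1/t^2) := by ring
      _ = KA*KB * t ^ (-2:ℝ) := by rw [hrp]
  have hsplit : Set.Ioi (0:ℝ) = Ioc 0 R ∪ Ioi R := (Ioc_union_Ioi_eq_Ioi hR0.le).symm
  have hφint : IntegrableOn φ (Set.Ioi (0:ℝ)) := by
    rw [hsplit]; exact hint1.union hint2
  exact hφint.congr_fun hEq measurableSet_Ioi
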